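/- Let B = [[b, c],[c, -b]] with b, c ∈ Sym_n(ℝ), and let G(s) = exp(sB). Write G(s) = N(s)A(s)N(s)ᵀ with N(s) = [[I_n,0],[n₁(s),I_n]], n₁(s) symmetric, A(s) = diag(h(s), h(s)⁻¹), h(s) symmetric positive definite (block-Gauss decomposition). Then h(s) satisfies the equation (h'(s)h(s)⁻¹)' = (c·h(s)⁻¹)². -/

import Mathlib

/-!
Since `G(s) = exp (s • B)` solves both `G' = B G` and `G' = G B`, each block of `G'` can be
read off in two ways. Writing `B = [[b, c], [c', d]]` and
`G = [[h, h n₁ᵀ], [n₁ h, n₁ h n₁ᵀ + h⁻¹]]`, the upper-left block of `B G` gives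
`h' h⁻¹ = b + c n₁`, while the left column of `G B` gives `h'` and `(n₁ h)'`, whence
`n₁' = h⁻¹ c' h⁻¹`. Hence `(h' h⁻¹)' = c n₁' = c h⁻¹ c' h⁻¹`.
-/

open Matrix

noncomputable def matDeriv {m n : Type*} (f : ℝ → Matrix m n ℝ) (s : ℝ) : Matrix m n ℝ :=
  Matrix.of fun i j => deriv (fun t => f t i j) s

theorem Matrix.fromBlocks_LDLT_eq {m n α : Type*} [Fintype m] [Fintype n] [DecidableEq m]
    [DecidableEq n] [Semiring α] (D₁ : Matrix m m α) (D₂ : Matrix n n α) (L : Matrix n m α) :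
    fromBlocks 1 0 L 1 * fromBlocks D₁ 0 0 D₂ * (fromBlocks 1 0 L 1)ᵀ =
      fromBlocks D₁ (D₁ * Lᵀ) (L * D₁) (L * D₁ * Lᵀ + D₂) := by
  simp [fromBlocks_transpose, fromBlocks_multiply, Matrix.mul_assoc]

section
attribute [local instance] Matrix.linftyOpNormedAddCommGroup Matrix.linftyOpNormedSpace
  Matrix.linftyOpNormedRing Matrix.linftyOpNormedAlgebra

variable {l m n : Type*} [Fintype l] [Fintype m] [Fintype n]

theorem matDeriv_eq_of_hasDerivAt {f : ℝ → Matrix m n ℝ} {f' : Matrix m n ℝ} {t : ℝ}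
    (hf : HasDerivAt f f' t) : matDeriv f t = f' := by
  ext i j
  let L : Matrix m n ℝ →ₗ[ℝ] ℝ :=
    { toFun := fun A => A i j, map_add' := fun _ _ => rfl, map_smul' := fun _ _ => rfl }
  exact (L.toContinuousLinearMap.hasFDerivAt.comp_hasDerivAt t hf).deriv

theorem HasDerivAt.matrix_submatrix {l' m' : Type*} [Fintype l'] [Fintype m']
    {f : ℝ → Matrix m n ℝ} {f' : Matrix m n ℝ} {t : ℝ}
    (hf : HasDerivAt f f' t) (r : l' → m) (c : m' → n) :
    HasDerivAt (fun u => (f u).submatrix r c) (f'.submatrix r c) t :=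
  let L : Matrix m n ℝ →ₗ[ℝ] Matrix l' m' ℝ :=
    { toFun := fun A => A.submatrix r c, map_add' := fun _ _ => rfl, map_smul' := fun _ _ => rfl }
  L.toContinuousLinearMap.hasFDerivAt.comp_hasDerivAt t hf

theorem HasDerivAt.matrix_toBlocks₁₁ {f : ℝ → Matrix (l ⊕ m) (l ⊕ m) ℝ}
    {f' : Matrix (l ⊕ m) (l ⊕ m) ℝ} {t : ℝ} (hf : HasDerivAt f f' t) :
    HasDerivAt (fun u => (f u).toBlocks₁₁) f'.toBlocks₁₁ t :=
  hf.matrix_submatrix Sum.inl Sum.inl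

theorem HasDerivAt.matrix_toBlocks₂₁ {f : ℝ → Matrix (l ⊕ m) (l ⊕ m) ℝ}
    {f' : Matrix (l ⊕ m) (l ⊕ m) ℝ} {t : ℝ} (hf : HasDerivAt f f' t) :
    HasDerivAt (fun u => (f u).toBlocks₂₁) f'.toBlocks₂₁ t :=
  hf.matrix_submatrix Sum.inr Sum.inl

variable [DecidableEq n]

theorem HasDerivAt.matrix_inv {f : ℝ → Matrix n n ℝ} {f' : Matrix n n ℝ} {t : ℝ}
    (hf : HasDerivAt f f' t) (hunit : IsUnit (f t)) :
    HasDerivAt (fun u => (f u)⁻¹) (-((f t)⁻¹ * f' * (f t)⁻¹)) t := by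
  have hinv := hasFDerivAt_ringInverse (𝕜 := ℝ) hunit.unit
  rw [hunit.unit_spec] at hinv
  have := hinv.comp_hasDerivAt t hf
  simp only [Function.comp_def, ← nonsing_inv_eq_ringInverse, coe_units_inv,
    hunit.unit_spec] at this
  exact this

-- Restated so that `exp` is elaborated with the default `Matrix` instances instead of the
-- `linfty` ones, which `simp` would not identify with them.
theorem hasDerivAt_exp_smul_matrix (B : Matrix n n ℝ) (t : ℝ) :
    HasDerivAt (fun u : ℝ => NormedSpace.exp (u • B)) (NormedSpace.exp (t • B) * B) t :=
  hasDerivAt_exp_smul_const B t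

theorem hasDerivAt_exp_smul_matrix' (B : Matrix n n ℝ) (t : ℝ) :
    HasDerivAt (fun u : ℝ => NormedSpace.exp (u • B)) (B * NormedSpace.exp (t • B)) t :=
  hasDerivAt_exp_smul_const' B t

variable {b c c' d : Matrix n n ℝ} {h n₁ : ℝ → Matrix n n ℝ}

theorem hasDerivAt_gaussFactor_diag
    (hG : ∀ s, NormedSpace.exp (s • fromBlocks b c c' d) =
      fromBlocks (h s) (h s * (n₁ s)ᵀ) (n₁ s * h s) (n₁ s * h s * (n₁ s)ᵀ + (h s)⁻¹)) (s : ℝ) :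
    HasDerivAt h ((b + c * n₁ s) * h s) s := by
  have := (hasDerivAt_exp_smul_matrix' (fromBlocks b c c' d) s).matrix_toBlocks₁₁
  simpa [hG, fromBlocks_multiply, Matrix.add_mul, Matrix.mul_assoc] using this

theorem hasDerivAt_gaussFactor_lower (hunit : ∀ s, IsUnit (h s))
    (hG : ∀ s, NormedSpace.exp (s • fromBlocks b c c' d) =
      fromBlocks (h s) (h s * (n₁ s)ᵀ) (n₁ s * h s) (n₁ s * h s * (n₁ s)ᵀ + (h s)⁻¹)) (s : ℝ) :
    HasDerivAt n₁ ((h s)⁻¹ * c' * (h s)⁻¹) s := by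
  have hGB := hasDerivAt_exp_smul_matrix (fromBlocks b c c' d) s
  have hh : HasDerivAt h (h s * (b + (n₁ s)ᵀ * c')) s := by
    simpa [hG, fromBlocks_multiply, Matrix.mul_add, Matrix.mul_assoc] using hGB.matrix_toBlocks₁₁
  have hnh : HasDerivAt (fun u => n₁ u * h u)
      (n₁ s * h s * b + (n₁ s * h s * (n₁ s)ᵀ + (h s)⁻¹) * c') s := by
    simpa [hG, fromBlocks_multiply] using hGB.matrix_toBlocks₂₁
  have hn₁ : (fun u => n₁ u * h u * (h u)⁻¹) = n₁ :=
    funext fun u => mul_nonsing_inv_cancel_right _ _ ((isUnit_iff_isUnit_det _).mp (hunit u))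
  have hprod := hnh.mul (hh.matrix_inv (hunit s))
  change HasDerivAt (fun u => n₁ u * h u * (h u)⁻¹) _ s at hprod
  rw [hn₁] at hprod
  convert hprod using 1
  rw [nonsing_inv_mul_cancel_left _ _ ((isUnit_iff_isUnit_det _).mp (hunit s))]
  simp only [Matrix.add_mul, Matrix.mul_add, mul_neg, Matrix.mul_assoc]
  abel

theorem matDeriv_mul_inv_gaussFactor_diag (hunit : ∀ s, IsUnit (h s))
    (hdecomp : ∀ s, NormedSpace.exp (s • fromBlocks b c c' d) =
      fromBlocks 1 0 (n₁ s) 1 * fromBlocks (h s) 0 0 (h s)⁻¹ * (fromBlocks 1 0 (n₁ s) 1)ᵀ)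
    (s : ℝ) :
    matDeriv (fun t => matDeriv h t * (h t)⁻¹) s = c * (h s)⁻¹ * c' * (h s)⁻¹ := by
  have hG : ∀ s, NormedSpace.exp (s • fromBlocks b c c' d) =
      fromBlocks (h s) (h s * (n₁ s)ᵀ) (n₁ s * h s) (n₁ s * h s * (n₁ s)ᵀ + (h s)⁻¹) :=
    fun s => (hdecomp s).trans (fromBlocks_LDLT_eq _ _ _)
  have hlog : (fun t => matDeriv h t * (h t)⁻¹) = fun t => b + c * n₁ t := funext fun t => by
    rw [matDeriv_eq_of_hasDerivAt (hasDerivAt_gaussFactor_diag hG t),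
      mul_nonsing_inv_cancel_right _ _ ((isUnit_iff_isUnit_det _).mp (hunit t))]
  rw [hlog, matDeriv_eq_of_hasDerivAt
    (((hasDerivAt_gaussFactor_lower hunit hG s).const_mul c).const_add b)]
  simp only [Matrix.mul_assoc]

end

theorem stmt19_general (n : ℕ)
    (b c : Matrix (Fin n) (Fin n) ℝ)
    (B : Matrix (Fin n ⊕ Fin n) (Fin n ⊕ Fin n) ℝ)
    (hB : B = Matrix.fromBlocks b c c (-b))
    (h n₁ : ℝ → Matrix (Fin n) (Fin n) ℝ)
    (hpos : ∀ s, (h s).PosDef)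
    (hdecomp : ∀ s, NormedSpace.exp (s • B) =
      Matrix.fromBlocks 1 0 (n₁ s) 1 * Matrix.fromBlocks (h s) 0 0 (h s)⁻¹ *
        (Matrix.fromBlocks 1 0 (n₁ s) 1)ᵀ)
    (s : ℝ) :
    matDeriv (fun t => matDeriv h t * (h t)⁻¹) s = (c * (h s)⁻¹) ^ 2 := by
  subst hB
  rw [sq, ← Matrix.mul_assoc]
  exact matDeriv_mul_inv_gaussFactor_diag (fun t => (hpos t).isUnit) hdecomp s

/-- for `B = [[b,c],[c,-b]]` with `b, c` symmetric and `G(s) = exp(sB)`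
with block-Gauss decomposition `G = N A Nᵀ`, `N = [[I,0],[n₁,I]]` (`n₁` symmetric),
`A = diag(h, h⁻¹)` (`h` symmetric positive definite), the upper-left block `h(s)`
satisfies `(h'h⁻¹)' = (c h⁻¹)²`. -/
theorem stmt19 (n : ℕ)
    (b c : Matrix (Fin n) (Fin n) ℝ) (hb : bᵀ = b) (hc : cᵀ = c)
    (B : Matrix (Fin n ⊕ Fin n) (Fin n ⊕ Fin n) ℝ)
    (hB : B = Matrix.fromBlocks b c c (-b))
    (h n₁ : ℝ → Matrix (Fin n) (Fin n) ℝ)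
    (hpos : ∀ s, (h s).PosDef) (hsymm : ∀ s, (h s)ᵀ = h s)
    (n₁symm : ∀ s, (n₁ s)ᵀ = n₁ s)
    (hdecomp : ∀ s, NormedSpace.exp (s • B) =
      Matrix.fromBlocks 1 0 (n₁ s) 1 * Matrix.fromBlocks (h s) 0 0 (h s)⁻¹ *
        (Matrix.fromBlocks 1 0 (n₁ s) 1)ᵀ)
    (s : ℝ) :
    matDeriv (fun t => matDeriv h t * (h t)⁻¹) s = (c * (h s)⁻¹) ^ 2 :=
  stmt19_general n b c B hB h n₁ hpos hdecomp s
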